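/- arXiv:1912.02759 — 6 statements merged into one kernel-verified Lean document; each statement's English description precedes it below -/
import Mathlib

section
/- ⊢ K̄_C B_C^D φ → (φ → B_C^D φ), for any coalitions C, D and any formula φ of Φ. -/
namespace DutyToWarn

/-- The language Φ: propositional variables, negation, implication,
distributed knowledge `K_C φ`, and second-order blameworthiness `B_C^D φ`. -/
inductive Formula (Agent V : Type) : Type
  | var : V → Formula Agent V
  | neg : Formula Agent V → Formula Agent V
  | imp : Formula Agent V → Formula Agent V → Formula Agent V
  | know : Set Agent → Formula Agent V → Formula Agent V
  | blame : Set Agent → Set Agent → Formula Agent V → Formula Agent V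

variable {Agent V B : Type}

namespace Formula

/-- φ ∨ ψ is defined through ¬ and → in the usual way: ¬φ → ψ. -/
def disj (φ ψ : Formula Agent V) : Formula Agent V := imp (neg φ) ψ

/-- φ ∧ ψ is defined through ¬ and → in the usual way: ¬(φ → ¬ψ). -/
def conj (φ ψ : Formula Agent V) : Formula Agent V := neg (imp φ (neg ψ))

/-- φ ↔ ψ is defined as (φ → ψ) ∧ (ψ → φ). -/
def biimp (φ ψ : Formula Agent V) : Formula Agent V := conj (imp φ ψ) (imp ψ φ)

/-- K̄_C φ abbreviates ¬ K_C ¬ φ. -/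
def dknow (C : Set Agent) (φ : Formula Agent V) : Formula Agent V := neg (know C (neg φ))

end Formula

/-- The Boolean constant ⊥, defined through ¬ and →. -/
def falsum [Inhabited V] : Formula Agent V :=
  Formula.neg (Formula.imp (Formula.var default) (Formula.var default))

/-- The disjunction χ₁ ∨ … ∨ χₙ of a list of formulas; for n = 0 it is ⊥. -/
def bigOr [Inhabited V] : List (Formula Agent V) → Formula Agent V
  | [] => falsum
  | [φ] => φ
  | φ :: ψ :: l => φ.disj (bigOr (ψ :: l))

/-- A propositional valuation: any assignment of truth values to formulas
that respects negation and implication (treating K- and B-formulas as atoms). -/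
def IsPropValuation (v : Formula Agent V → Prop) : Prop :=
  (∀ φ : Formula Agent V, v φ.neg ↔ ¬ v φ) ∧
    ∀ φ ψ : Formula Agent V, v (φ.imp ψ) ↔ (v φ → v ψ)

/-- A propositional tautology in the language Φ. -/
def Tautology (φ : Formula Agent V) : Prop :=
  ∀ v : Formula Agent V → Prop, IsPropValuation v → v φ

/-- ⊢ φ : provability from the axioms using Modus Ponens and Necessitation. -/
inductive Provable : Formula Agent V → Prop
  | taut {φ : Formula Agent V} : Tautology φ → Provable φ
  | truthK {C : Set Agent} {φ : Formula Agent V} :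
      Provable ((Formula.know C φ).imp φ)
  | truthB {C D : Set Agent} {φ : Formula Agent V} :
      Provable ((Formula.blame C D φ).imp φ)
  | distr {C : Set Agent} {φ ψ : Formula Agent V} :
      Provable ((Formula.know C (φ.imp ψ)).imp ((Formula.know C φ).imp (Formula.know C ψ)))
  | negIntro {C : Set Agent} {φ : Formula Agent V} :
      Provable ((Formula.know C φ).neg.imp (Formula.know C (Formula.know C φ).neg))
  | monoK {C E : Set Agent} {φ : Formula Agent V} (h : C ⊆ E) :
      Provable ((Formula.know C φ).imp (Formula.know E φ))
  | monoB {C D E F : Set Agent} {φ : Formula Agent V} (h1 : C ⊆ E) (h2 : D ⊆ F) :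
      Provable ((Formula.blame C D φ).imp (Formula.blame E F φ))
  | noneToAct {C : Set Agent} {φ : Formula Agent V} :
      Provable (Formula.neg (Formula.blame C ∅ φ))
  | jointResp {C D E F : Set Agent} {φ ψ : Formula Agent V} (h : D ∩ F = ∅) :
      Provable (((Formula.dknow C (Formula.blame C D φ)).conj
        (Formula.dknow E (Formula.blame E F ψ))).imp
        ((φ.disj ψ).imp (Formula.blame (C ∪ E) (D ∪ F) (φ.disj ψ))))
  | strictCond {C D : Set Agent} {φ ψ : Formula Agent V} :
      Provable ((Formula.know C (φ.imp ψ)).imp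
        ((Formula.blame C D ψ).imp (φ.imp (Formula.blame C D φ))))
  | introB {C D : Set Agent} {φ : Formula Agent V} :
      Provable ((Formula.blame C D φ).imp (Formula.know C (φ.imp (Formula.blame C D φ))))
  | mp {φ ψ : Formula Agent V} : Provable (φ.imp ψ) → Provable φ → Provable ψ
  | nec {C : Set Agent} {φ : Formula Agent V} : Provable φ → Provable (Formula.know C φ)

/-- X ⊢ φ : provability from the theorems of the system together with the
additional hypotheses X, using only Modus Ponens. -/
inductive ProvableFrom (X : Set (Formula Agent V)) : Formula Agent V → Prop
  | hyp {φ : Formula Agent V} (h : φ ∈ X) : ProvableFrom X φ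
  | thm {φ : Formula Agent V} (h : Provable φ) : ProvableFrom X φ
  | mp {φ ψ : Formula Agent V} (h1 : ProvableFrom X (φ.imp ψ)) (h2 : ProvableFrom X φ) :
      ProvableFrom X ψ

/-- A game (Definition 1). -/
structure Game (Agent V : Type) where
  I : Type
  Δ : Type
  Ω : Type
  sim : Agent → I → I → Prop
  sim_equiv : ∀ a : Agent, Equivalence (sim a)
  P : Set (I × (Agent → Δ) × Ω)
  play_exists : ∀ (α : I) (δ : Agent → Δ), ∃ ω : Ω, (α, δ, ω) ∈ P
  π : V → Set (I × (Agent → Δ) × Ω)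
  π_sub : ∀ p : V, π p ⊆ P

/-- α ∼_C α' : indistinguishability by a coalition. -/
def Game.simC (G : Game Agent V) (C : Set Agent) (α α' : G.I) : Prop :=
  ∀ a ∈ C, G.sim a α α'

/-- Satisfiability (α,δ,ω) ⊩ φ (Definition 2). -/
def Game.Sat (G : Game Agent V) :
    Formula Agent V → (G.I × (Agent → G.Δ) × G.Ω) → Prop
  | Formula.var p, x => x ∈ G.π p
  | Formula.neg φ, x => ¬ G.Sat φ x
  | Formula.imp φ ψ, x => G.Sat φ x → G.Sat ψ x
  | Formula.know C φ, x => ∀ x' ∈ G.P, G.simC C x.1 x'.1 → G.Sat φ x'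
  | Formula.blame C D φ, x => G.Sat φ x ∧
      ∃ s : Agent → G.Δ, ∀ x' ∈ G.P, G.simC C x.1 x'.1 →
        (∀ a ∈ D, s a = x'.2.1 a) → ¬ G.Sat φ x'

/-- A set of formulas is consistent if no contradiction is derivable from it. -/
def Consistent (X : Set (Formula Agent V)) : Prop :=
  ¬ ∃ φ : Formula Agent V, ProvableFrom X φ ∧ ProvableFrom X φ.neg

/-- A maximal consistent set: consistent with no proper consistent extension. -/
def MaxConsistent (X : Set (Formula Agent V)) : Prop :=
  Consistent X ∧ ∀ Y : Set (Formula Agent V), X ⊆ Y → Consistent Y → Y = X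

/-- One step (Cᵢ,bᵢ),Xᵢ of a sequence in the set of outcomes of the canonical game. -/
abbrev Step (Agent V B : Type) : Type := Set Agent × B × Set (Formula Agent V)

/-- Validity of a sequence X₀,(C₁,b₁),X₁,…,(Cₙ,bₙ),Xₙ : each Xᵢ is maximal
consistent and {φ | K_{Cᵢ} φ ∈ X_{i-1}} ⊆ Xᵢ. -/
def ValidSeq (X₀ : Set (Formula Agent V)) : List (Step Agent V B) → Prop
  | [] => True
  | (C, _, X) :: l =>
      MaxConsistent X ∧ (∀ φ : Formula Agent V, Formula.know C φ ∈ X₀ → φ ∈ X) ∧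
        ValidSeq X l

/-- The set Ω of outcomes of the canonical game G(X₀): valid sequences starting at X₀
(the sequence of steps after X₀ is recorded). -/
def COutcome (X₀ : Set (Formula Agent V)) (B : Type) : Type :=
  {l : List (Step Agent V B) // ValidSeq X₀ l}

/-- The last maximal consistent set of a sequence. -/
def hdSeq (X₀ : Set (Formula Agent V)) : List (Step Agent V B) → Set (Formula Agent V)
  | [] => X₀
  | (_, _, X) :: l => hdSeq X l

/-- hd(ω) : the last maximal consistent set of the outcome ω. -/
def chd {X₀ : Set (Formula Agent V)} (ω : COutcome X₀ B) : Set (Formula Agent V) :=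
  hdSeq X₀ ω.1

/-- ω ∼_a ω' in the Tree of Knowledge: all edges along the unique path between
ω and ω' are labeled with agent a, i.e. there is a common ancestor w such that
every edge from w down to ω and from w down to ω' is labeled with a. -/
def csimA {X₀ : Set (Formula Agent V)} (a : Agent) (u v : COutcome X₀ B) : Prop :=
  ∃ w t t' : List (Step Agent V B),
    u.1 = w ++ t ∧ v.1 = w ++ t' ∧ (∀ s ∈ t, a ∈ s.1) ∧ (∀ s ∈ t', a ∈ s.1)

/-- ω ∼_C ω' iff ω ∼_a ω' for each a ∈ C. -/
def csimC {X₀ : Set (Formula Agent V)} (C : Set Agent) (u v : COutcome X₀ B) : Prop :=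
  ∀ a ∈ C, csimA a u v

/-- The relation ∼_𝒜 on outcomes. -/
def crel (X₀ : Set (Formula Agent V)) (B : Type) : COutcome X₀ B → COutcome X₀ B → Prop :=
  csimC (Set.univ : Set Agent)

/-- The set I of initial states of the canonical game: I = Ω/∼_𝒜. -/
def CI (X₀ : Set (Formula Agent V)) (B : Type) : Type :=
  Quot (crel X₀ B)

/-- The equivalence class of an outcome. -/
def ctoI {X₀ : Set (Formula Agent V)} (u : COutcome X₀ B) : CI X₀ B :=
  Quot.mk (crel X₀ B) u

/-- The relation α ∼_C α' on I, induced on representatives. -/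
def IsimC {X₀ : Set (Formula Agent V)} (C : Set Agent) (α α' : CI X₀ B) : Prop :=
  ∃ u v : COutcome X₀ B, ctoI u = α ∧ ctoI v = α' ∧ csimC C u v

/-- The domain of actions of the canonical game: Δ = {(φ,C,ω)}. -/
abbrev CAct (X₀ : Set (Formula Agent V)) (B : Type) : Type :=
  Formula Agent V × Set Agent × COutcome X₀ B

/-- Triples (α, δ, ω) over the canonical game. -/
abbrev CPlay (X₀ : Set (Formula Agent V)) (B : Type) : Type :=
  CI X₀ B × (Agent → CAct X₀ B) × COutcome X₀ B

/-- The set P of plays of the canonical game (Definition 13). -/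
def CP (X₀ : Set (Formula Agent V)) (B : Type) : Set (CPlay X₀ B) :=
  {x | ctoI x.2.2 = x.1 ∧
    ∀ (v : COutcome X₀ B) (C D : Set Agent) (ψ : Formula Agent V),
      Formula.dknow C (Formula.blame C D ψ) ∈ chd v →
      (∀ a ∈ D, x.2.1 a = (ψ, C, v)) →
      csimC C x.2.2 v →
      Formula.neg ψ ∈ chd x.2.2}

/-- π(p) in the canonical game. -/
def Cπ (X₀ : Set (Formula Agent V)) (B : Type) (p : V) : Set (CPlay X₀ B) :=
  {x | x ∈ CP X₀ B ∧ Formula.var p ∈ chd x.2.2}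

/-- Satisfiability in the canonical game G(X₀) (Definition 2 instantiated). -/
def CSat (X₀ : Set (Formula Agent V)) (B : Type) :
    Formula Agent V → CPlay X₀ B → Prop
  | Formula.var p, x => x ∈ Cπ X₀ B p
  | Formula.neg φ, x => ¬ CSat X₀ B φ x
  | Formula.imp φ ψ, x => CSat X₀ B φ x → CSat X₀ B ψ x
  | Formula.know C φ, x => ∀ x' ∈ CP X₀ B, IsimC C x.1 x'.1 → CSat X₀ B φ x'
  | Formula.blame C D φ, x => CSat X₀ B φ x ∧
      ∃ s : Agent → CAct X₀ B, ∀ x' ∈ CP X₀ B, IsimC C x.1 x'.1 →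
        (∀ a ∈ D, s a = x'.2.1 a) → ¬ CSat X₀ B φ x'

/-! Introspection of blameworthiness gives `B_C^D φ → K_C (φ → B_C^D φ)`. By negative
introspection, a formula that implies `K_C χ` may be weakened to its possibility `K̄_C`, so
`K̄_C B_C^D φ → K_C (φ → B_C^D φ)`; truth of knowledge then gives `φ → B_C^D φ`. -/
namespace Provable

variable {a b c : Formula Agent V}

theorem imp_trans (hab : Provable (a.imp b)) (hbc : Provable (b.imp c)) :
    Provable (a.imp c) := by
  refine mp (mp (taut fun v ⟨_, hi⟩ => ?_) hab) hbc
  simp only [hi]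
  tauto

theorem contrapose (h : Provable (a.imp b)) : Provable (b.neg.imp a.neg) := by
  refine mp (taut fun v ⟨hn, hi⟩ => ?_) h
  simp only [hi, hn]
  tauto

theorem not_imp_comm (h : Provable (a.neg.imp b)) : Provable (b.neg.imp a) := by
  refine mp (taut fun v ⟨hn, hi⟩ => ?_) h
  simp only [hi, hn]
  tauto

theorem know_imp_know {C : Set Agent} (h : Provable (a.imp b)) :
    Provable ((Formula.know C a).imp (Formula.know C b)) :=
  mp distr (nec h)

theorem dknow_imp_know {C : Set Agent} (h : Provable (a.imp (Formula.know C b))) :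
    Provable ((Formula.dknow C a).imp (Formula.know C b)) :=
  not_imp_comm (imp_trans negIntro (know_imp_know (contrapose h)))

end Provable

/-- Lemma 3: ⊢ K̄_C B_C^D φ → (φ → B_C^D φ). -/
theorem alt_fairness {Agent V : Type} (C D : Set Agent) (φ : Formula Agent V) :
    Provable ((Formula.dknow C (Formula.blame C D φ)).imp
      (φ.imp (Formula.blame C D φ))) :=
  Provable.imp_trans (Provable.dknow_imp_know Provable.introB) Provable.truthK

end DutyToWarn
end

section
/- For any integer n ≥ 0, any coalitions E₁,…,Eₙ and any pairwise disjoint coalitions F₁,…,Fₙ, and any formulas χ₁,…,χₙ of Φ: {K̄_{E_i} B_{E_i}^{F_i} χ_i}_{i=1}^n, χ₁∨…∨χₙ ⊢ B_{E₁∪…∪Eₙ}^{F₁∪…∪Fₙ}(χ₁∨…∨χₙ). -/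
namespace DutyToWarn

variable {Agent V B : Type}

/-! Induction on n, peeling off χ₁. Write ψ = χ₂ ∨ … ∨ χₙ, E' = E₂ ∪ … ∪ Eₙ,
F' = F₂ ∪ … ∪ Fₙ and B' = B_{E'}^{F'} ψ. By the deduction theorem the induction hypothesis gives
ψ → B' from the hypotheses K̄_{Eᵢ} B_{Eᵢ}^{Fᵢ} χᵢ (i ≥ 2), and each of these is known to E' by
negative introspection, so K_{E'}(ψ → B'). Now either K̄_{E'} B', and Joint Responsibility
applies to χ₁ and ψ; or K_{E'} ¬B', hence K_{E'} ¬ψ, so χ₁ holds and is blameworthy by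
K̄_{E₁} B_{E₁}^{F₁} χ₁, and the Strict Conditional transfers the blame from χ₁ to χ₁ ∨ ψ. -/

open Formula

lemma Provable.of_valuation {φ : Formula Agent V}
    (h : ∀ v : Formula Agent V → Prop, (∀ ψ, v ψ.neg ↔ ¬ v ψ) →
      (∀ ψ χ, v (ψ.imp χ) ↔ (v ψ → v χ)) → v φ) :
    Provable φ :=
  Provable.taut fun v hv => h v hv.1 hv.2

lemma Provable.imp_trans_s5 {a b c : Formula Agent V} (hab : Provable (a.imp b))
    (hbc : Provable (b.imp c)) : Provable (a.imp c) :=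
  ((Provable.of_valuation (φ := (a.imp b).imp ((b.imp c).imp (a.imp c)))
    (by intro v _ hi; simp only [hi]; tauto)).mp hab).mp hbc

lemma Provable.contrapose_s5 {a b : Formula Agent V} (h : Provable (a.imp b)) :
    Provable (b.neg.imp a.neg) :=
  (Provable.of_valuation (φ := (a.imp b).imp (b.neg.imp a.neg))
    (by intro v hn hi; simp only [hn, hi]; tauto)).mp h

lemma Provable.know_imp_know_s5 {C : Set Agent} {a b : Formula Agent V} (h : Provable (a.imp b)) :
    Provable ((know C a).imp (know C b)) :=
  Provable.distr.mp (Provable.nec h)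

lemma Provable.dknow_blame_imp {C D : Set Agent} {φ : Formula Agent V} :
    Provable ((dknow C (blame C D φ)).imp (φ.imp (blame C D φ))) := by
  set b := blame C D φ
  have hnot : Provable ((know C (φ.imp b)).neg.imp (know C b.neg)) :=
    Provable.negIntro.imp_trans_s5 (Provable.know_imp_know_s5 Provable.introB.contrapose_s5)
  have hswap : Provable ((dknow C b).imp (know C (φ.imp b))) :=
    (Provable.of_valuation (φ := ((know C (φ.imp b)).neg.imp (know C b.neg)).imp
      ((dknow C b).imp (know C (φ.imp b))))
      (by intro v hn hi; simp only [dknow, hn, hi]; tauto)).mp hnot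
  exact hswap.imp_trans_s5 Provable.truthK

namespace ProvableFrom

variable {X Y : Set (Formula Agent V)}

lemma mono (hXY : X ⊆ Y) {φ : Formula Agent V} (h : ProvableFrom X φ) : ProvableFrom Y φ := by
  induction h with
  | hyp h => exact hyp (hXY h)
  | thm h => exact thm h
  | mp _ _ ih₁ ih₂ => exact ih₁.mp ih₂

lemma mp_thm {φ ψ : Formula Agent V} (h : Provable (φ.imp ψ)) (hφ : ProvableFrom X φ) :
    ProvableFrom X ψ :=
  (thm h).mp hφ

lemma deduction {φ ψ : Formula Agent V} (h : ProvableFrom (insert φ X) ψ) :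
    ProvableFrom X (φ.imp ψ) := by
  have weaken : ∀ χ : Formula Agent V, Provable (χ.imp (φ.imp χ)) := fun χ =>
    Provable.of_valuation (by intro v _ hi; simp only [hi]; tauto)
  induction h with
  | hyp h =>
    rcases h with rfl | h
    · exact thm (Provable.of_valuation (by intro v _ hi; simp only [hi]; tauto))
    · exact mp_thm (weaken _) (hyp h)
  | thm h => exact mp_thm (weaken _) (thm h)
  | @mp a b _ _ ih₁ ih₂ =>
    have distrib : Provable ((φ.imp (a.imp b)).imp ((φ.imp a).imp (φ.imp b))) :=
      Provable.of_valuation (by intro v _ hi; simp only [hi]; tauto)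
    exact (mp_thm distrib ih₁).mp ih₂

lemma by_cases (θ : Formula Agent V) {γ : Formula Agent V}
    (hpos : ProvableFrom (insert θ X) γ) (hneg : ProvableFrom (insert θ.neg X) γ) :
    ProvableFrom X γ := by
  have hcases : Provable ((θ.imp γ).imp ((θ.neg.imp γ).imp γ)) :=
    Provable.of_valuation (by intro v hn hi; simp only [hn, hi]; tauto)
  exact (mp_thm hcases (deduction hpos)).mp (deduction hneg)

lemma of_falsum [Inhabited V] (h : ProvableFrom X falsum) (φ : Formula Agent V) :
    ProvableFrom X φ :=
  mp_thm (Provable.of_valuation (by intro v hn hi; simp only [falsum, hn, hi]; tauto)) h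

lemma know_mp {C : Set Agent} {φ ψ : Formula Agent V} (h : ProvableFrom X (know C (φ.imp ψ)))
    (hφ : ProvableFrom X (know C φ)) : ProvableFrom X (know C ψ) :=
  (mp_thm Provable.distr h).mp hφ

lemma know_of_forall_know {C : Set Agent} {φ : Formula Agent V} (h : ProvableFrom Y φ)
    (hY : ∀ ψ ∈ Y, ProvableFrom X (know C ψ)) : ProvableFrom X (know C φ) := by
  induction h with
  | hyp h => exact hY _ h
  | thm h => exact thm (Provable.nec h)
  | mp _ _ ih₁ ih₂ => exact know_mp ih₁ ih₂

lemma blame_disj_of_know_neg_blame {C D E F : Set Agent} {φ ψ : Formula Agent V}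
    (hφ : ProvableFrom X (dknow C (blame C D φ)))
    (hψ : ProvableFrom X (know E (ψ.imp (blame E F ψ))))
    (hnb : ProvableFrom X (know E (blame E F ψ).neg)) (hφψ : ProvableFrom X (φ.disj ψ)) :
    ProvableFrom X (blame (C ∪ E) (D ∪ F) (φ.disj ψ)) := by
  have hnψ : ProvableFrom X (know E ψ.neg) :=
    know_mp (mp_thm (Provable.know_imp_know_s5
      (Provable.of_valuation (by intro v hn hi; simp only [hn, hi]; tauto))) hψ) hnb
  have hleft : Provable (ψ.neg.imp ((φ.disj ψ).imp φ)) :=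
    Provable.of_valuation (by intro v hn hi; simp only [disj, hn, hi]; tauto)
  have hKφ : ProvableFrom X (know (C ∪ E) ((φ.disj ψ).imp φ)) :=
    mp_thm (Provable.monoK Set.subset_union_right) (mp_thm (Provable.know_imp_know_s5 hleft) hnψ)
  have hφ' : ProvableFrom X φ := (mp_thm hleft (mp_thm Provable.truthK hnψ)).mp hφψ
  have hBφ : ProvableFrom X (blame (C ∪ E) (D ∪ F) φ) :=
    mp_thm (Provable.monoB Set.subset_union_left Set.subset_union_left)
      ((mp_thm Provable.dknow_blame_imp hφ).mp hφ')
  exact ((mp_thm Provable.strictCond hKφ).mp hBφ).mp hφψ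

lemma blame_disj_of_dknow_blame {C D E F : Set Agent} {φ ψ : Formula Agent V}
    (hDF : D ∩ F = ∅) (hφ : ProvableFrom X (dknow C (blame C D φ)))
    (hψ : ProvableFrom X (dknow E (blame E F ψ))) (hφψ : ProvableFrom X (φ.disj ψ)) :
    ProvableFrom X (blame (C ∪ E) (D ∪ F) (φ.disj ψ)) := by
  have hpair : Provable ((dknow C (blame C D φ)).imp
      ((dknow E (blame E F ψ)).imp ((dknow C (blame C D φ)).conj (dknow E (blame E F ψ))))) :=
    Provable.of_valuation (by intro v hn hi; simp only [conj, hn, hi]; tauto)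
  exact (mp_thm (Provable.jointResp hDF) ((mp_thm hpair hφ).mp hψ)).mp hφψ

lemma blame_disj {C D E F : Set Agent} {φ ψ : Formula Agent V} (hDF : D ∩ F = ∅)
    (hφ : ProvableFrom X (dknow C (blame C D φ)))
    (hψ : ProvableFrom X (know E (ψ.imp (blame E F ψ))))
    (hφψ : ProvableFrom X (φ.disj ψ)) :
    ProvableFrom X (blame (C ∪ E) (D ∪ F) (φ.disj ψ)) := by
  refine by_cases (know E (blame E F ψ).neg) ?_ ?_
  · have hX := Set.subset_insert (know E (blame E F ψ).neg) X
    exact blame_disj_of_know_neg_blame (hφ.mono hX) (hψ.mono hX) (hyp (Set.mem_insert _ _))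
      (hφψ.mono hX)
  · have hX := Set.subset_insert (dknow E (blame E F ψ)) X
    exact blame_disj_of_dknow_blame hDF (hφ.mono hX) (hyp (Set.mem_insert _ _)) (hφψ.mono hX)

end ProvableFrom

lemma iUnion_fin_succ {α : Type*} {n : ℕ} (s : Fin (n + 1) → Set α) :
    ⋃ i, s i = s 0 ∪ ⋃ i : Fin n, s i.succ := by
  conv_lhs => rw [← Fin.cons_self_tail s]
  exact Set.iUnion_cons _ _

lemma bigOr_ofFn_succ_succ [Inhabited V] {n : ℕ} (χ : Fin (n + 2) → Formula Agent V) :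
    bigOr (List.ofFn χ) = (χ 0).disj (bigOr (List.ofFn fun i : Fin (n + 1) => χ i.succ)) := by
  rw [List.ofFn_succ, List.ofFn_succ]
  rfl

/-- Lemma 6: {K̄_{Eᵢ} B_{Eᵢ}^{Fᵢ} χᵢ}ᵢ, χ₁∨…∨χₙ ⊢
    B_{E₁∪…∪Eₙ}^{F₁∪…∪Fₙ}(χ₁∨…∨χₙ), for pairwise disjoint F₁,…,Fₙ. -/
theorem super_joint_responsibility {Agent V : Type} [Inhabited V] (n : ℕ)
    (E F : Fin n → Set Agent) (χ : Fin n → Formula Agent V)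
    (hF : ∀ i j : Fin n, i ≠ j → F i ∩ F j = ∅) :
    ProvableFrom
      (Set.range (fun i : Fin n =>
          Formula.dknow (E i) (Formula.blame (E i) (F i) (χ i))) ∪
        {bigOr (List.ofFn χ)})
      (Formula.blame (⋃ i, E i) (⋃ i, F i) (bigOr (List.ofFn χ))) := by
  induction n with
  | zero => exact ProvableFrom.of_falsum (.hyp (Or.inr rfl)) _
  | succ n ih =>
    set X := Set.range (fun i => dknow (E i) (blame (E i) (F i) (χ i))) ∪ {bigOr (List.ofFn χ)}
    have hX₀ : ProvableFrom X (dknow (E 0) (blame (E 0) (F 0) (χ 0))) := .hyp (Or.inl ⟨0, rfl⟩)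
    have hbig : ProvableFrom X (bigOr (List.ofFn χ)) := .hyp (Or.inr rfl)
    rcases n with _ | n
    · exact .mp_thm (Provable.monoB (Set.subset_iUnion E 0) (Set.subset_iUnion F 0))
        ((ProvableFrom.mp_thm Provable.dknow_blame_imp hX₀).mp hbig)
    · have htail := ih (fun i => E i.succ) (fun i => F i.succ) (fun i => χ i.succ)
        fun i j hij => hF _ _ (Fin.succ_injective _ |>.ne hij)
      rw [Set.union_singleton] at htail
      have hK := htail.deduction.know_of_forall_know (X := X) (C := ⋃ i : Fin (n + 1), E i.succ)
        (by
          rintro _ ⟨i, rfl⟩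
          exact .mp_thm (Provable.monoK (Set.subset_iUnion (fun i : Fin (n + 1) => E i.succ) i))
            (.mp_thm Provable.negIntro (.hyp (Or.inl ⟨i.succ, rfl⟩))))
      have hdisj : F 0 ∩ ⋃ i : Fin (n + 1), F i.succ = ∅ := by
        rw [Set.inter_iUnion]
        exact Set.iUnion_eq_empty.2 fun i => hF 0 i.succ (Fin.succ_ne_zero i).symm
      rw [bigOr_ofFn_succ_succ] at hbig ⊢
      rw [iUnion_fin_succ E, iUnion_fin_succ F]
      exact hX₀.blame_disj hdisj hK hbig

end DutyToWarn
end

section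
/- Soundness of the Joint Responsibility axiom: for any game and any play (α,δ,ω)∈P, if D∩F=∅, (α,δ,ω)⊩K̄_C B_C^D φ, (α,δ,ω)⊩K̄_E B_E^F ψ, and (α,δ,ω)⊩φ∨ψ, then (α,δ,ω)⊩B_{C∪E}^{D∪F}(φ∨ψ). -/
namespace DutyToWarn

variable {Agent V B : Type}

/-!
The counterfactual part of `B_C^D φ` depends only on the `∼_C`-class of the initial state,
so `K̄_C B_C^D φ` already yields at the actual play an action profile of `D` that excludes `φ`
throughout that class. Since `D` and `F` are disjoint, the profiles for `φ` and for `ψ` glue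
into one profile of `D ∪ F`, which excludes `φ ∨ ψ` throughout the `∼_{C ∪ E}`-class.
-/

namespace Game

variable (G : Game Agent V)

def CanPrevent (C D : Set Agent) (α : G.I) (φ : Formula Agent V) : Prop :=
  ∃ s : Agent → G.Δ, ∀ y ∈ G.P, G.simC C α y.1 → (∀ a ∈ D, s a = y.2.1 a) → ¬ G.Sat φ y

variable {G}

theorem simC_mono {C E : Set Agent} (hCE : C ⊆ E) {α β : G.I} (h : G.simC E α β) :
    G.simC C α β :=
  fun a ha => h a (hCE ha)

theorem simC_symm {C : Set Agent} {α β : G.I} (h : G.simC C α β) : G.simC C β α :=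
  fun a ha => (G.sim_equiv a).symm (h a ha)

theorem simC_trans {C : Set Agent} {α β γ : G.I} (h₁ : G.simC C α β) (h₂ : G.simC C β γ) :
    G.simC C α γ :=
  fun a ha => (G.sim_equiv a).trans (h₁ a ha) (h₂ a ha)

theorem sat_blame_iff {C D : Set Agent} {φ : Formula Agent V} {x : G.I × (Agent → G.Δ) × G.Ω} :
    G.Sat (Formula.blame C D φ) x ↔ G.Sat φ x ∧ G.CanPrevent C D x.1 φ :=
  Iff.rfl

theorem sat_dknow_iff {C : Set Agent} {φ : Formula Agent V} {x : G.I × (Agent → G.Δ) × G.Ω} :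
    G.Sat (Formula.dknow C φ) x ↔ ∃ y ∈ G.P, G.simC C x.1 y.1 ∧ G.Sat φ y := by
  simp only [Formula.dknow, Sat, not_forall, not_not, exists_prop]

theorem sat_disj_iff {φ ψ : Formula Agent V} {x : G.I × (Agent → G.Δ) × G.Ω} :
    G.Sat (φ.disj ψ) x ↔ G.Sat φ x ∨ G.Sat ψ x := by
  simp only [Formula.disj, Sat, or_iff_not_imp_left]

theorem CanPrevent.of_simC {C D : Set Agent} {α β : G.I} {φ : Formula Agent V}
    (hαβ : G.simC C α β) (h : G.CanPrevent C D β φ) : G.CanPrevent C D α φ := by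
  obtain ⟨s, hs⟩ := h
  exact ⟨s, fun y hy hαy => hs y hy (simC_trans (simC_symm hαβ) hαy)⟩

theorem canPrevent_of_sat_dknow_blame {C D : Set Agent} {φ : Formula Agent V}
    {x : G.I × (Agent → G.Δ) × G.Ω} (h : G.Sat (Formula.dknow C (Formula.blame C D φ)) x) :
    G.CanPrevent C D x.1 φ := by
  obtain ⟨y, -, hxy, hy⟩ := sat_dknow_iff.mp h
  exact (sat_blame_iff.mp hy).2.of_simC hxy

theorem CanPrevent.disj {C D E F : Set Agent} {α : G.I} {φ ψ : Formula Agent V}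
    (hDF : Disjoint D F) (hφ : G.CanPrevent C D α φ) (hψ : G.CanPrevent E F α ψ) :
    G.CanPrevent (C ∪ E) (D ∪ F) α (φ.disj ψ) := by
  classical
  obtain ⟨s₁, hs₁⟩ := hφ
  obtain ⟨s₂, hs₂⟩ := hψ
  refine ⟨D.piecewise s₁ s₂, fun y hy hαy hagree => ?_⟩
  have hφy : ¬ G.Sat φ y := hs₁ y hy (simC_mono Set.subset_union_left hαy) fun a ha => by
    rw [← hagree a (Or.inl ha), Set.piecewise_eq_of_mem _ _ _ ha]
  have hψy : ¬ G.Sat ψ y := hs₂ y hy (simC_mono Set.subset_union_right hαy) fun a ha => by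
    rw [← hagree a (Or.inr ha), Set.piecewise_eq_of_notMem _ _ _ (hDF.notMem_of_mem_right ha)]
  rw [sat_disj_iff, not_or]
  exact ⟨hφy, hψy⟩

end Game

theorem joint_responsibility_sound_general {Agent V : Type} (G : Game Agent V)
    (x : G.I × (Agent → G.Δ) × G.Ω)
    (C D E F : Set Agent) (φ ψ : Formula Agent V) (hDF : D ∩ F = ∅)
    (h1 : G.Sat (Formula.dknow C (Formula.blame C D φ)) x)
    (h2 : G.Sat (Formula.dknow E (Formula.blame E F ψ)) x)
    (h3 : G.Sat (φ.disj ψ) x) :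
    G.Sat (Formula.blame (C ∪ E) (D ∪ F) (φ.disj ψ)) x :=
  Game.sat_blame_iff.mpr ⟨h3, (Game.canPrevent_of_sat_dknow_blame h1).disj
    (Set.disjoint_iff_inter_eq_empty.mpr hDF) (Game.canPrevent_of_sat_dknow_blame h2)⟩

/-- Lemma 8: Soundness of the Joint Responsibility axiom. -/
theorem joint_responsibility_sound {Agent V : Type} (G : Game Agent V)
    (x : G.I × (Agent → G.Δ) × G.Ω) (hx : x ∈ G.P)
    (C D E F : Set Agent) (φ ψ : Formula Agent V) (hDF : D ∩ F = ∅)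
    (h1 : G.Sat (Formula.dknow C (Formula.blame C D φ)) x)
    (h2 : G.Sat (Formula.dknow E (Formula.blame E F ψ)) x)
    (h3 : G.Sat (φ.disj ψ) x) :
    G.Sat (Formula.blame (C ∪ E) (D ∪ F) (φ.disj ψ)) x :=
  joint_responsibility_sound_general G x C D E F φ ψ hDF h1 h2 h3

end DutyToWarn
end

section
/- Soundness of the Strict Conditional axiom: for any game and any play (α,δ,ω)∈P, if (α,δ,ω)⊩K_C(φ→ψ), (α,δ,ω)⊩B_C^D ψ, and (α,δ,ω)⊩φ, then (α,δ,ω)⊩B_C^D φ. -/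
namespace DutyToWarn

variable {Agent V B : Type}

theorem strict_conditional_sound_general {Agent V : Type} (G : Game Agent V)
    (x : G.I × (Agent → G.Δ) × G.Ω)
    (C D : Set Agent) (φ ψ : Formula Agent V)
    (h1 : G.Sat (Formula.know C (φ.imp ψ)) x)
    (h2 : G.Sat (Formula.blame C D ψ) x)
    (h3 : G.Sat φ x) :
    G.Sat (Formula.blame C D φ) x := by
  obtain ⟨-, s, hs⟩ := h2
  -- The profile `s` that prevents ψ also prevents φ, since φ implies ψ on every C-indistinguishable play.
  exact ⟨h3, s, fun x' hx' hsim hD hφ' => hs x' hx' hsim hD (h1 x' hx' hsim hφ')⟩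

/-- Lemma 9: Soundness of the Strict Conditional axiom. -/
theorem strict_conditional_sound {Agent V : Type} (G : Game Agent V)
    (x : G.I × (Agent → G.Δ) × G.Ω) (hx : x ∈ G.P)
    (C D : Set Agent) (φ ψ : Formula Agent V)
    (h1 : G.Sat (Formula.know C (φ.imp ψ)) x)
    (h2 : G.Sat (Formula.blame C D ψ) x)
    (h3 : G.Sat φ x) :
    G.Sat (Formula.blame C D φ) x :=
  strict_conditional_sound_general G x C D φ ψ h1 h2 h3

end DutyToWarn
end

section
/- Soundness of the Introspection of Blameworthiness axiom: for any game and any play (α,δ,ω)∈P, if (α,δ,ω)⊩B_C^D φ, then (α,δ,ω)⊩K_C(φ→B_C^D φ). -/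
namespace DutyToWarn

variable {Agent V B : Type}

theorem Game.simC_trans_s9 (G : Game Agent V) {C : Set Agent} {α β γ : G.I}
    (hαβ : G.simC C α β) (hβγ : G.simC C β γ) : G.simC C α γ :=
  fun a ha => (G.sim_equiv a).trans (hαβ a ha) (hβγ a ha)

-- The blaming profile `s` that witnesses `B_C^D φ` at `x` works unchanged at every `x' ∼_C x`.
theorem introspection_sound_general {Agent V : Type} (G : Game Agent V)
    (x : G.I × (Agent → G.Δ) × G.Ω)
    (C D : Set Agent) (φ : Formula Agent V)
    (h : G.Sat (Formula.blame C D φ) x) :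
    G.Sat (Formula.know C (φ.imp (Formula.blame C D φ))) x := by
  obtain ⟨-, s, hs⟩ := h
  intro x' _ hxx' hφ'
  exact ⟨hφ', s, fun x'' hx'' hx'x'' => hs x'' hx'' (G.simC_trans_s9 hxx' hx'x'')⟩

/-- Lemma 10: Soundness of the Introspection of Blameworthiness axiom. -/
theorem introspection_sound {Agent V : Type} (G : Game Agent V)
    (x : G.I × (Agent → G.Δ) × G.Ω) (hx : x ∈ G.P)
    (C D : Set Agent) (φ : Formula Agent V)
    (h : G.Sat (Formula.blame C D φ) x) :
    G.Sat (Formula.know C (φ.imp (Formula.blame C D φ))) x :=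
  introspection_sound_general G x C D φ h

end DutyToWarn
end

section
/- Transport lemma: in the canonical game G(X₀), for any outcomes ω, ω' ∈ Ω with ω ∼_C ω' and any formula φ of Φ: K_C φ ∈ hd(ω) if and only if K_C φ ∈ hd(ω'). -/
namespace DutyToWarn

variable {Agent V B : Type}

/-! Along an edge labelled by `E ⊇ C`, positive introspection carries `K_C φ` forward and
negative introspection carries `¬K_C φ` forward, so membership of `K_C φ` is constant along any
path whose edges are all labelled by every agent of `C`. If `ω ∼_C ω'`, the paths from the
longest common prefix of `ω` and `ω'` down to each of them are such paths. -/

theorem _root_.List.exists_longest_common_prefix {α : Type*} :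
    ∀ l₁ l₂ : List α, ∃ p, p <+: l₁ ∧ p <+: l₂ ∧ ∀ w, w <+: l₁ → w <+: l₂ → w <+: p
  | [], _ => ⟨[], List.nil_prefix, List.nil_prefix, fun _ hw _ => hw⟩
  | _ :: _, [] => ⟨[], List.nil_prefix, List.nil_prefix, fun _ _ hw => hw⟩
  | a :: l₁, b :: l₂ => by
    by_cases hab : a = b
    · subst hab
      obtain ⟨p, hp₁, hp₂, hp⟩ := List.exists_longest_common_prefix l₁ l₂
      refine ⟨a :: p, List.cons_prefix_cons.mpr ⟨rfl, hp₁⟩,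
        List.cons_prefix_cons.mpr ⟨rfl, hp₂⟩, fun w hw₁ hw₂ => ?_⟩
      cases w with
      | nil => exact List.nil_prefix
      | cons c w =>
        obtain ⟨rfl, hw₁'⟩ := List.cons_prefix_cons.mp hw₁
        exact List.cons_prefix_cons.mpr ⟨rfl, hp w hw₁' (List.cons_prefix_cons.mp hw₂).2⟩
    · refine ⟨[], List.nil_prefix, List.nil_prefix, fun w hw₁ hw₂ => ?_⟩
      cases w with
      | nil => exact List.nil_prefix
      | cons c w =>
        exact absurd ((List.cons_prefix_cons.mp hw₁).1.symm.trans
          (List.cons_prefix_cons.mp hw₂).1) hab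

/-- The longest common prefix is a branching point that works for every `i` at once. -/
theorem _root_.List.exists_common_prefix_forall_suffix {α ι : Type*} {P : ι → α → Prop}
    {l₁ l₂ : List α}
    (h : ∀ i, ∃ w t₁ t₂, l₁ = w ++ t₁ ∧ l₂ = w ++ t₂ ∧ (∀ s ∈ t₁, P i s) ∧ ∀ s ∈ t₂, P i s) :
    ∃ w t₁ t₂, l₁ = w ++ t₁ ∧ l₂ = w ++ t₂ ∧ ∀ i, (∀ s ∈ t₁, P i s) ∧ ∀ s ∈ t₂, P i s := by
  obtain ⟨p, ⟨t₁, rfl⟩, ⟨t₂, rfl⟩, hp⟩ := List.exists_longest_common_prefix l₁ l₂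
  refine ⟨p, t₁, t₂, rfl, rfl, fun i => ?_⟩
  obtain ⟨w, u₁, u₂, hu₁, hu₂, hP₁, hP₂⟩ := h i
  obtain ⟨m, rfl⟩ := hp w (hu₁ ▸ List.prefix_append _ _) (hu₂ ▸ List.prefix_append _ _)
  have e₁ : u₁ = m ++ t₁ := List.append_cancel_left (by rw [← hu₁, List.append_assoc])
  have e₂ : u₂ = m ++ t₂ := List.append_cancel_left (by rw [← hu₂, List.append_assoc])
  exact ⟨fun s hs => hP₁ s (e₁ ▸ List.mem_append_right m hs),
    fun s hs => hP₂ s (e₂ ▸ List.mem_append_right m hs)⟩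

section Transport

open Formula

theorem Tautology.imp_self {φ : Formula Agent V} : Tautology (φ.imp φ) :=
  fun v ⟨_, hi⟩ => by simp only [hi]; tauto

theorem Tautology.imp_intro {φ ψ : Formula Agent V} : Tautology (ψ.imp (φ.imp ψ)) :=
  fun v ⟨_, hi⟩ => by simp only [hi]; tauto

theorem Tautology.frege {φ ψ χ : Formula Agent V} :
    Tautology ((φ.imp (ψ.imp χ)).imp ((φ.imp ψ).imp (φ.imp χ))) :=
  fun v ⟨_, hi⟩ => by simp only [hi]; tauto

theorem Tautology.imp_trans {φ ψ χ : Formula Agent V} :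
    Tautology ((φ.imp ψ).imp ((ψ.imp χ).imp (φ.imp χ))) :=
  fun v ⟨_, hi⟩ => by simp only [hi]; tauto

theorem Tautology.neg_intro {φ χ : Formula Agent V} :
    Tautology ((φ.imp χ).imp ((φ.imp χ.neg).imp φ.neg)) :=
  fun v ⟨hn, hi⟩ => by simp only [hi, hn]; tauto

theorem Tautology.imp_neg_comm {φ ψ : Formula Agent V} :
    Tautology ((φ.imp ψ.neg).imp (ψ.imp φ.neg)) :=
  fun v ⟨hn, hi⟩ => by simp only [hi, hn]; tauto

theorem Tautology.neg_imp_comm {φ ψ : Formula Agent V} :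
    Tautology ((φ.neg.imp ψ).imp (ψ.neg.imp φ)) :=
  fun v ⟨hn, hi⟩ => by simp only [hi, hn]; tauto

theorem Provable.imp_trans_s11 {φ ψ χ : Formula Agent V}
    (h₁ : Provable (φ.imp ψ)) (h₂ : Provable (ψ.imp χ)) : Provable (φ.imp χ) :=
  .mp (.mp (.taut .imp_trans) h₁) h₂

theorem Provable.know_imp_know_know {C : Set Agent} {φ : Formula Agent V} :
    Provable ((know C φ).imp (know C (know C φ))) := by
  have truth : Provable ((know C φ).imp (know C (know C φ).neg).neg) :=
    .mp (.taut .imp_neg_comm) (.truthK (C := C) (φ := (know C φ).neg))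
  have introspection : Provable ((know C (know C φ).neg).neg.imp (know C φ)) :=
    .mp (.taut .neg_imp_comm) .negIntro
  exact truth.imp_trans_s11 (Provable.negIntro.imp_trans_s11 (.mp .distr (.nec introspection)))

theorem ProvableFrom.of_insert {X : Set (Formula Agent V)} {φ ψ : Formula Agent V}
    (h : ProvableFrom (insert φ X) ψ) (hφ : ProvableFrom X φ) : ProvableFrom X ψ := by
  induction h with
  | hyp h =>
    rcases Set.mem_insert_iff.mp h with rfl | h
    · exact hφ
    · exact .hyp h
  | thm h => exact .thm h
  | mp _ _ ih₁ ih₂ => exact .mp ih₁ ih₂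

theorem ProvableFrom.deduction_s11 {X : Set (Formula Agent V)} {φ ψ : Formula Agent V}
    (h : ProvableFrom (insert φ X) ψ) : ProvableFrom X (φ.imp ψ) := by
  induction h with
  | hyp h =>
    rcases Set.mem_insert_iff.mp h with rfl | h
    · exact .thm (.taut .imp_self)
    · exact .mp (.thm (.taut .imp_intro)) (.hyp h)
  | thm h => exact .mp (.thm (.taut .imp_intro)) (.thm h)
  | mp _ _ ih₁ ih₂ => exact .mp (.mp (.thm (.taut .frege)) ih₁) ih₂

namespace MaxConsistent

variable {X : Set (Formula Agent V)}

theorem mem_of_consistent_insert (hX : MaxConsistent X) {φ : Formula Agent V}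
    (h : Consistent (insert φ X)) : φ ∈ X :=
  hX.2 _ (Set.subset_insert _ _) h ▸ Set.mem_insert _ _

theorem mem_of_provableFrom (hX : MaxConsistent X) {φ : Formula Agent V}
    (h : ProvableFrom X φ) : φ ∈ X :=
  hX.mem_of_consistent_insert fun ⟨χ, h₁, h₂⟩ => hX.1 ⟨χ, h₁.of_insert h, h₂.of_insert h⟩

theorem mem_of_provable_imp (hX : MaxConsistent X) {φ ψ : Formula Agent V}
    (h : Provable (φ.imp ψ)) (hφ : φ ∈ X) : ψ ∈ X :=
  hX.mem_of_provableFrom (.mp (.thm h) (.hyp hφ))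

theorem neg_mem_iff (hX : MaxConsistent X) {φ : Formula Agent V} : φ.neg ∈ X ↔ φ ∉ X := by
  refine ⟨fun hn h => hX.1 ⟨φ, .hyp h, .hyp hn⟩, fun h => ?_⟩
  have : ¬ Consistent (insert φ X) := fun hcons => h (hX.mem_of_consistent_insert hcons)
  obtain ⟨χ, h₁, h₂⟩ := not_not.mp this
  exact hX.mem_of_provableFrom (.mp (.mp (.thm (.taut .neg_intro)) h₁.deduction_s11) h₂.deduction_s11)

end MaxConsistent

theorem know_mem_iff_of_step {X Y : Set (Formula Agent V)} (hX : MaxConsistent X)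
    (hY : MaxConsistent Y) {C E : Set Agent} (hCE : C ⊆ E)
    (hstep : ∀ ψ : Formula Agent V, know E ψ ∈ X → ψ ∈ Y) (φ : Formula Agent V) :
    know C φ ∈ Y ↔ know C φ ∈ X := by
  refine ⟨fun h => ?_, fun h => hstep _ (hX.mem_of_provable_imp
    (Provable.know_imp_know_know.imp_trans_s11 (.monoK hCE)) h)⟩
  by_contra hn
  exact hY.neg_mem_iff.mp
    (hstep _ (hX.mem_of_provable_imp (Provable.negIntro.imp_trans_s11 (.monoK hCE))
      (hX.neg_mem_iff.mpr hn))) h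

theorem know_mem_hdSeq_iff {C : Set Agent} {φ : Formula Agent V} :
    ∀ {t : List (Step Agent V B)} {X : Set (Formula Agent V)}, MaxConsistent X →
      ValidSeq X t → (∀ s ∈ t, C ⊆ s.1) → (know C φ ∈ hdSeq X t ↔ know C φ ∈ X)
  | [], _, _, _, _ => Iff.rfl
  | (_, _, _) :: _, _, hX, ⟨hY, hstep, ht⟩, hC =>
    (know_mem_hdSeq_iff hY ht fun s hs => hC s (List.mem_cons_of_mem _ hs)).trans
      (know_mem_iff_of_step hX hY (hC _ List.mem_cons_self) hstep φ)

theorem know_mem_hdSeq_append_iff {C : Set Agent} {φ : Formula Agent V}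
    {t : List (Step Agent V B)} (hC : ∀ s ∈ t, C ⊆ s.1) :
    ∀ {w : List (Step Agent V B)} {X : Set (Formula Agent V)}, MaxConsistent X →
      ValidSeq X (w ++ t) → (know C φ ∈ hdSeq X (w ++ t) ↔ know C φ ∈ hdSeq X w)
  | [], _, hX, h => know_mem_hdSeq_iff hX h hC
  | (_, _, Y) :: _, _, _, h => know_mem_hdSeq_append_iff hC (X := Y) h.1 h.2.2

end Transport

theorem csimC.exists_common_prefix {X₀ : Set (Formula Agent V)} {C : Set Agent}
    {ω ω' : COutcome X₀ B} (h : csimC C ω ω') :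
    ∃ w t₁ t₂, ω.1 = w ++ t₁ ∧ ω'.1 = w ++ t₂ ∧ (∀ s ∈ t₁, C ⊆ s.1) ∧ ∀ s ∈ t₂, C ⊆ s.1 := by
  obtain ⟨w, t₁, t₂, h₁, h₂, hC⟩ :=
    List.exists_common_prefix_forall_suffix
      (P := fun (a : C) (s : Step Agent V B) => ↑a ∈ s.1) fun a => by exact h a a.2
  exact ⟨w, t₁, t₂, h₁, h₂, fun s hs a ha => (hC ⟨a, ha⟩).1 s hs,
    fun s hs a ha => (hC ⟨a, ha⟩).2 s hs⟩

theorem transport_lemma_general {Agent V B : Type}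
    (X₀ : Set (Formula Agent V)) (hX₀ : MaxConsistent X₀)
    (C : Set Agent) (ω ω' : COutcome X₀ B) (h : csimC C ω ω')
    (φ : Formula Agent V) :
    Formula.know C φ ∈ chd ω ↔ Formula.know C φ ∈ chd ω' := by
  obtain ⟨w, t₁, t₂, h₁, h₂, hC₁, hC₂⟩ := h.exists_common_prefix
  have hv₁ : ValidSeq X₀ (w ++ t₁) := h₁ ▸ ω.2
  have hv₂ : ValidSeq X₀ (w ++ t₂) := h₂ ▸ ω'.2
  rw [chd, chd, h₁, h₂, know_mem_hdSeq_append_iff hC₁ hX₀ hv₁,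
    know_mem_hdSeq_append_iff hC₂ hX₀ hv₂]

/-- Lemma 12, transport lemma: in the canonical game G(X₀),
    if ω ∼_C ω' then K_C φ ∈ hd(ω) iff K_C φ ∈ hd(ω'). -/
theorem transport_lemma {Agent V B : Type}
    (hB : Cardinal.mk Agent < Cardinal.mk B)
    (X₀ : Set (Formula Agent V)) (hX₀ : MaxConsistent X₀)
    (C : Set Agent) (ω ω' : COutcome X₀ B) (h : csimC C ω ω')
    (φ : Formula Agent V) :
    Formula.know C φ ∈ chd ω ↔ Formula.know C φ ∈ chd ω' :=
  transport_lemma_general X₀ hX₀ C ω ω' h φ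

end DutyToWarn
end
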